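/- arXiv:2111.02560 — 3 statements merged into one kernel-verified Lean document; each statement's English description precedes it below -/
import Mathlib

section
/- Let N ≥ 1, let A be an N×N real matrix, let ε and φ be real numbers, and let i denote the imaginary unit. If θ : ℝ → (Fin N → ℂ) is differentiable and satisfies, for every index i₀ and every time t, θ̇_{i₀}(t) = ε ∑_{j} A_{i₀ j} (sin(θ_j(t) − θ_{i₀}(t) − φ) − i·cos(θ_j(t) − θ_{i₀}(t) − φ)) (with the complex sine and cosine), then the function x : ℝ → (Fin N → ℂ) defined by x_{i₀}(t) = exp(i·θ_{i₀}(t)) satisfies the linear system ẋ_{i₀}(t) = ε e^{−iφ} ∑_{j} A_{i₀ j} x_j(t) for all i₀ and t. -/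
/-!
Since `sin w - i cos w = -i e^{iw}`, the chain rule gives `ẋ_i = i x_i θ̇_i` with
`i x_i (sin w - i cos w) = e^{iθ_i} e^{i(θ_j - θ_i - φ)} = e^{-iφ} x_j` for `w = θ_j - θ_i - φ`.
-/

open Complex

lemma Complex.sin_sub_I_mul_cos (z : ℂ) : sin z - I * cos z = -I * exp (I * z) := by
  rw [mul_comm I z, exp_mul_I]
  ring_nf
  rw [I_sq]
  ring

lemma Complex.exp_I_mul_mul_I_mul_sin_sub_I_mul_cos (a b φ : ℂ) :
    exp (I * a) * (I * (sin (b - a - φ) - I * cos (b - a - φ))) = exp (-I * φ) * exp (I * b) := by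
  rw [sin_sub_I_mul_cos, ← mul_assoc I, neg_mul, mul_neg, I_mul_I, neg_neg, one_mul,
    ← exp_add, ← exp_add]
  ring_nf

theorem complex_kuramoto_linearizes_general
    (N : ℕ) (A : Matrix (Fin N) (Fin N) ℝ) (ε φ : ℝ)
    (θ : ℝ → Fin N → ℂ)
    (hθ : ∀ (i₀ : Fin N) (t : ℝ),
      HasDerivAt (fun s => θ s i₀)
        ((ε : ℂ) * ∑ j : Fin N, (A i₀ j : ℂ) *
          (Complex.sin (θ t j - θ t i₀ - (φ : ℂ)) -
            Complex.I * Complex.cos (θ t j - θ t i₀ - (φ : ℂ)))) t) :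
    ∀ (i₀ : Fin N) (t : ℝ),
      HasDerivAt (fun s => Complex.exp (Complex.I * θ s i₀))
        ((ε : ℂ) * Complex.exp (-Complex.I * (φ : ℂ)) *
          ∑ j : Fin N, (A i₀ j : ℂ) * Complex.exp (Complex.I * θ t j)) t := by
  intro i₀ t
  convert ((hθ i₀ t).const_mul I).cexp using 1
  simp only [Finset.mul_sum]
  refine Finset.sum_congr rfl fun j _ => ?_
  linear_combination -(ε * A i₀ j : ℂ) * exp_I_mul_mul_I_mul_sin_sub_I_mul_cos (θ t i₀) (θ t j) φ

/-- The complex-valued Kuramoto model: if `θ : ℝ → Fin N → ℂ` satisfies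
`θ̇_i = ε ∑_j A_{ij} (sin(θ_j − θ_i − φ) − i cos(θ_j − θ_i − φ))` (complex sine/cosine),
then `x_i = exp(i θ_i)` satisfies the linear system `ẋ_i = ε e^{−iφ} ∑_j A_{ij} x_j`. -/
theorem complex_kuramoto_linearizes
    (N : ℕ) (hN : 1 ≤ N) (A : Matrix (Fin N) (Fin N) ℝ) (ε φ : ℝ)
    (θ : ℝ → Fin N → ℂ) (hθdiff : ∀ i₀, Differentiable ℝ (fun t => θ t i₀))
    (hθ : ∀ (i₀ : Fin N) (t : ℝ),
      HasDerivAt (fun s => θ s i₀)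
        ((ε : ℂ) * ∑ j : Fin N, (A i₀ j : ℂ) *
          (Complex.sin (θ t j - θ t i₀ - (φ : ℂ)) -
            Complex.I * Complex.cos (θ t j - θ t i₀ - (φ : ℂ)))) t) :
    ∀ (i₀ : Fin N) (t : ℝ),
      HasDerivAt (fun s => Complex.exp (Complex.I * θ s i₀))
        ((ε : ℂ) * Complex.exp (-Complex.I * (φ : ℂ)) *
          ∑ j : Fin N, (A i₀ j : ℂ) * Complex.exp (Complex.I * θ t j)) t :=
  complex_kuramoto_linearizes_general N A ε φ θ hθ
end

section
/- Let N ≥ 1, A an N×N real matrix, ε, φ ∈ ℝ, and K_{ij} = ε e^{−iφ} A_{ij}. Suppose r : ℝ → (Fin N → ℝ) and ψ : ℝ → (Fin N → ℝ) are differentiable with r_i(t) > 0 for all i, t, and the function x defined by x_i(t) = r_i(t) e^{iψ_i(t)} satisfies ẋ = K x. Then for all i and t: ψ̇_i(t) = ε ∑_j A_{ij} (r_j(t)/r_i(t)) sin(ψ_j(t) − ψ_i(t) − φ) and ṙ_i(t) = ε ∑_j A_{ij} r_j(t) cos(ψ_j(t) − ψ_i(t) − φ). -/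
/-!
Write `x_i = r_i e^{iψ_i}`. By the product and chain rules `ẋ_i = (ṙ_i + i r_i ψ̇_i) e^{iψ_i}`, so
multiplying `ẋ = K x` by `e^{-iψ_i}` gives
`ṙ_i + i r_i ψ̇_i = ε ∑_j A_{ij} r_j e^{i(ψ_j - ψ_i - φ)}`;
the real and imaginary parts of this identity are the two claimed equations.
-/

section PolarForm

open Complex

theorem hasDerivAt_ofReal_mul_exp_I_mul {r ψ : ℝ → ℝ} {r' ψ' t : ℝ}
    (hr : HasDerivAt r r' t) (hψ : HasDerivAt ψ ψ' t) :
    HasDerivAt (fun s => (r s : ℂ) * exp (I * ψ s))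
      ((r' + (r t * ψ' : ℝ) * I) * exp (I * ψ t)) t := by
  refine (hr.ofReal_comp.mul (hψ.ofReal_comp.const_mul I).cexp).congr_deriv ?_
  push_cast
  ring

theorem polar_velocity_eq {r ψ : ℝ → ℝ} {r' ψ' t : ℝ} {z : ℂ}
    (hr : HasDerivAt r r' t) (hψ : HasDerivAt ψ ψ' t)
    (hz : HasDerivAt (fun s => (r s : ℂ) * exp (I * ψ s)) z t) :
    (r' + (r t * ψ' : ℝ) * I : ℂ) = z * exp (-(I * ψ t)) := by
  rw [hz.unique (hasDerivAt_ofReal_mul_exp_I_mul hr hψ), mul_assoc, ← exp_add, add_neg_cancel,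
    exp_zero, mul_one]

theorem eq_sum_of_ofReal_add_mul_I_eq_sum_exp {ι : Type*} {s : Finset ι} {a b : ℝ}
    {c θ : ι → ℝ} (h : (a + b * I : ℂ) = ∑ j ∈ s, (c j : ℂ) * exp (θ j * I)) :
    a = ∑ j ∈ s, c j * Real.cos (θ j) ∧ b = ∑ j ∈ s, c j * Real.sin (θ j) := by
  constructor
  · simpa only [add_re, ofReal_re, re_ofReal_mul, I_re, mul_zero, add_zero, re_sum,
      exp_ofReal_mul_I_re] using congrArg re h
  · simpa only [add_im, ofReal_im, mul_I_im, ofReal_re, zero_add, im_sum, im_ofReal_mul,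
      exp_ofReal_mul_I_im] using congrArg im h

theorem mulVec_polar_mul_exp_neg {ι : Type*} [Fintype ι] (A : Matrix ι ι ℝ) (ε φ : ℝ)
    (r ψ : ι → ℝ) (i : ι) :
    Matrix.mulVec (fun k l => (ε : ℂ) * exp (-I * φ) * A k l)
        (fun j => (r j : ℂ) * exp (I * ψ j)) i * exp (-(I * ψ i)) =
      ∑ j, ((ε * A i j * r j : ℝ) : ℂ) * exp ((ψ j - ψ i - φ : ℝ) * I) := by
  simp only [Matrix.mulVec, dotProduct, Finset.sum_mul]
  refine Finset.sum_congr rfl fun j _ => ?_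
  have hphase : ((ψ j - ψ i - φ : ℝ) : ℂ) * I = -I * φ + I * ψ j + -(I * ψ i) := by
    push_cast
    ring
  rw [hphase, exp_add, exp_add]
  push_cast
  ring

end PolarForm

theorem polar_form_kuramoto_general
    (N : ℕ) (A : Matrix (Fin N) (Fin N) ℝ) (ε φ : ℝ)
    (K : Matrix (Fin N) (Fin N) ℂ)
    (hK : ∀ i j, K i j = (ε : ℂ) * Complex.exp (-Complex.I * (φ : ℂ)) * (A i j : ℂ))
    (r ψ : ℝ → Fin N → ℝ)
    (hrdiff : ∀ i, Differentiable ℝ (fun t => r t i))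
    (hψdiff : ∀ i, Differentiable ℝ (fun t => ψ t i))
    (hrpos : ∀ (i : Fin N) (t : ℝ), 0 < r t i)
    (hx : ∀ (i : Fin N) (t : ℝ),
      HasDerivAt (fun s => (r s i : ℂ) * Complex.exp (Complex.I * (ψ s i : ℂ)))
        (K.mulVec (fun j => (r t j : ℂ) * Complex.exp (Complex.I * (ψ t j : ℂ))) i) t) :
    (∀ (i : Fin N) (t : ℝ),
      HasDerivAt (fun s => ψ s i)
        (ε * ∑ j : Fin N, A i j * (r t j / r t i) * Real.sin (ψ t j - ψ t i - φ)) t) ∧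
    (∀ (i : Fin N) (t : ℝ),
      HasDerivAt (fun s => r s i)
        (ε * ∑ j : Fin N, A i j * r t j * Real.cos (ψ t j - ψ t i - φ)) t) := by
  have hKA : K = fun k l => (ε : ℂ) * Complex.exp (-Complex.I * φ) * A k l := funext₂ hK
  have hpolar (i : Fin N) (t : ℝ) :
      deriv (fun s => r s i) t = ∑ j, ε * A i j * r t j * Real.cos (ψ t j - ψ t i - φ) ∧
        r t i * deriv (fun s => ψ s i) t =
          ∑ j, ε * A i j * r t j * Real.sin (ψ t j - ψ t i - φ) := by
    refine eq_sum_of_ofReal_add_mul_I_eq_sum_exp ?_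
    rw [polar_velocity_eq (hrdiff i t).hasDerivAt (hψdiff i t).hasDerivAt (hx i t), hKA,
      mulVec_polar_mul_exp_neg]
  refine ⟨fun i t => (hψdiff i t).hasDerivAt.congr_deriv ?_,
    fun i t => (hrdiff i t).hasDerivAt.congr_deriv ?_⟩
  · have hri : r t i ≠ 0 := (hrpos i t).ne'
    refine mul_left_cancel₀ hri ?_
    rw [(hpolar i t).2, Finset.mul_sum, Finset.mul_sum]
    refine Finset.sum_congr rfl fun j _ => ?_
    field_simp
  · rw [(hpolar i t).1, Finset.mul_sum]
    exact Finset.sum_congr rfl fun j _ => by ring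

/-- Polar form: if `x_i(t) = r_i(t) e^{iψ_i(t)}` with `r_i > 0` solves `ẋ = K x` with
`K = ε e^{−iφ} A`, then the arguments obey the modulus-weighted Kuramoto model
`ψ̇_i = ε ∑_j A_{ij} (r_j/r_i) sin(ψ_j − ψ_i − φ)` and the moduli obey
`ṙ_i = ε ∑_j A_{ij} r_j cos(ψ_j − ψ_i − φ)`. -/
theorem polar_form_kuramoto
    (N : ℕ) (hN : 1 ≤ N) (A : Matrix (Fin N) (Fin N) ℝ) (ε φ : ℝ)
    (K : Matrix (Fin N) (Fin N) ℂ)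
    (hK : ∀ i j, K i j = (ε : ℂ) * Complex.exp (-Complex.I * (φ : ℂ)) * (A i j : ℂ))
    (r ψ : ℝ → Fin N → ℝ)
    (hrdiff : ∀ i, Differentiable ℝ (fun t => r t i))
    (hψdiff : ∀ i, Differentiable ℝ (fun t => ψ t i))
    (hrpos : ∀ (i : Fin N) (t : ℝ), 0 < r t i)
    (hx : ∀ (i : Fin N) (t : ℝ),
      HasDerivAt (fun s => (r s i : ℂ) * Complex.exp (Complex.I * (ψ s i : ℂ)))
        (K.mulVec (fun j => (r t j : ℂ) * Complex.exp (Complex.I * (ψ t j : ℂ))) i) t) :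
    (∀ (i : Fin N) (t : ℝ),
      HasDerivAt (fun s => ψ s i)
        (ε * ∑ j : Fin N, A i j * (r t j / r t i) * Real.sin (ψ t j - ψ t i - φ)) t) ∧
    (∀ (i : Fin N) (t : ℝ),
      HasDerivAt (fun s => r s i)
        (ε * ∑ j : Fin N, A i j * r t j * Real.cos (ψ t j - ψ t i - φ)) t) :=
  polar_form_kuramoto_general N A ε φ K hK r ψ hrdiff hψdiff hrpos hx
end

section
/- Let N ≥ 1, ε > 0, K = ε·(J − I) with J the N×N all-ones complex matrix, and let x₀ ∈ ℂ^N with mean c = (1/N)∑_j (x₀)_j. Let x(t) = exp(tK)·x₀. Then for every index i, e^{−ε(N−1)t} · x_i(t) → c as t → +∞. In particular, if c ≠ 0, then for all indices i, j the ratio x_i(t)/x_j(t) → 1 as t → +∞ (the phases Arg x_i(t) − Arg x_j(t) converge to 0): the network phase-synchronizes. -/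
/-!
Constant vectors are eigenvectors of `J - I` for the eigenvalue `N - 1`, and vectors with mean
zero are eigenvectors for `-1`. Splitting `x₀` into its mean `c` and a mean-zero remainder gives
`x(t) = e^{ε(N-1)t} c 𝟙 + e^{-εt} (x₀ - c 𝟙)`; after rescaling by `e^{-ε(N-1)t}` the second mode
decays like `e^{-εNt}`, and the ratios `x_i / x_j` are ratios of rescaled coordinates that all
tend to the same `c ≠ 0`.
-/

open NormedSpace Filter Topology Matrix

theorem sum_sub_mean_eq_zero {ι K : Type*} [Fintype ι] [Field K] [CharZero K] (v : ι → K) :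
    ∑ j, (v j - (1 / (Fintype.card ι : K)) * ∑ j, v j) = 0 := by
  rcases isEmpty_or_nonempty ι with _ | _
  · simp
  · simp [Finset.sum_sub_distrib]

namespace Matrix

variable {n : Type*} [Fintype n]

open scoped Norms.Operator in
theorem exp_mulVec_of_mulVec_eq_smul [DecidableEq n] {𝕂 : Type*} [RCLike 𝕂] {M : Matrix n n 𝕂}
    {v : n → 𝕂} {μ : 𝕂} (h : M *ᵥ v = μ • v) : exp M *ᵥ v = exp μ • v := by
  have hpow (k : ℕ) : M ^ k *ᵥ v = μ ^ k • v := by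
    induction k with
    | zero => simp
    | succ k ih => rw [pow_succ', ← mulVec_mulVec, ih, mulVec_smul, h, smul_smul, pow_succ]
  have hM := (exp_series_hasSum_exp' (𝕂 := 𝕂) M).map (mulVec.addMonoidHomLeft v)
    (continuous_id.matrix_mulVec continuous_const)
  have hμ := (exp_series_hasSum_exp' (𝕂 := 𝕂) μ).smul_const v
  refine hM.unique (hμ.congr_fun fun k => ?_)
  simp [mulVec.addMonoidHomLeft, smul_mulVec, hpow, smul_smul]

theorem mulVec_eq_const_sum_of_forall_eq_one {R : Type*} [NonAssocSemiring R]
    {J : Matrix n n R} (hJ : ∀ i j, J i j = 1) (v : n → R) :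
    J *ᵥ v = Function.const n (∑ j, v j) := by
  ext i
  simp [mulVec, dotProduct, hJ]

section AllOnesSubOne

variable [DecidableEq n] {R : Type*} [Ring R] {J : Matrix n n R}

theorem sub_one_mulVec_const_of_forall_eq_one (hJ : ∀ i j, J i j = 1) (a : R) :
    (J - 1) *ᵥ Function.const n a = ((Fintype.card n : R) - 1) • Function.const n a := by
  ext i
  simp [sub_mulVec, mulVec_eq_const_sum_of_forall_eq_one hJ, sub_mul]

theorem sub_one_mulVec_of_forall_eq_one_of_sum_eq_zero (hJ : ∀ i j, J i j = 1) {v : n → R}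
    (hv : ∑ j, v j = 0) : (J - 1) *ᵥ v = (-1 : R) • v := by
  ext i
  simp [sub_mulVec, mulVec_eq_const_sum_of_forall_eq_one hJ, hv]

end AllOnesSubOne

theorem exp_smul_sub_one_mulVec_of_forall_eq_one [DecidableEq n] {J : Matrix n n ℂ}
    (hJ : ∀ i j, J i j = 1) (s : ℂ) {v : n → ℂ} {c : ℂ}
    (hc : c = (1 / (Fintype.card n : ℂ)) * ∑ j, v j) (i : n) :
    (exp (s • (J - 1)) *ᵥ v) i
      = Complex.exp (s * ((Fintype.card n : ℂ) - 1)) * c + Complex.exp (-s) * (v i - c) := by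
  have hsplit : v = Function.const n c + (v - Function.const n c) := by abel
  have hconst : (s • (J - 1)) *ᵥ Function.const n c
      = (s * ((Fintype.card n : ℂ) - 1)) • Function.const n c := by
    rw [smul_mulVec, sub_one_mulVec_const_of_forall_eq_one hJ, smul_smul]
  have hmean_zero : (s • (J - 1)) *ᵥ (v - Function.const n c)
      = (-s) • (v - Function.const n c) := by
    rw [smul_mulVec, sub_one_mulVec_of_forall_eq_one_of_sum_eq_zero hJ
      (hc ▸ sum_sub_mean_eq_zero v), smul_smul, mul_neg_one]
  rw [hsplit, mulVec_add, exp_mulVec_of_mulVec_eq_smul hconst,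
    exp_mulVec_of_mulVec_eq_smul hmean_zero, ← Complex.exp_eq_exp_ℂ]
  simp

end Matrix

namespace Complex

theorem tendsto_exp_neg_mul_mul_add_exp_mul_mul {a b : ℂ} (hba : b.re < a.re) (c y : ℂ) :
    Tendsto (fun t : ℝ => cexp (-(a * t)) * (cexp (a * t) * c + cexp (b * t) * y)) atTop
      (𝓝 c) := by
  have hdecay : Tendsto (fun t : ℝ => cexp ((b - a) * t)) atTop (𝓝 0) := by
    simpa [tendsto_exp_nhds_zero_iff] using
      tendsto_const_nhds.neg_mul_atTop (sub_neg.mpr hba) tendsto_id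
  have hlim := (hdecay.mul_const y).const_add c
  rw [zero_mul, add_zero] at hlim
  refine hlim.congr fun t => ?_
  rw [mul_add, ← mul_assoc, ← mul_assoc, ← exp_add, ← exp_add, neg_add_cancel, exp_zero, one_mul,
    sub_mul, sub_eq_neg_add]

end Complex

open NormedSpace Filter in
theorem complete_graph_phase_synchronization_general
    (N : ℕ) (ε : ℝ) (hε : 0 < ε)
    (J : Matrix (Fin N) (Fin N) ℂ) (hJ : ∀ i j, J i j = 1)
    (K : Matrix (Fin N) (Fin N) ℂ) (hK : K = (ε : ℂ) • (J - 1))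
    (x₀ : Fin N → ℂ) (c : ℂ) (hc : c = (1 / (N : ℂ)) * ∑ j : Fin N, x₀ j)
    (x : ℝ → Fin N → ℂ) (hx : ∀ t, x t = (exp (t • K)).mulVec x₀) :
    (∀ i : Fin N,
      Tendsto (fun t : ℝ => Complex.exp (-(ε * ((N : ℝ) - 1) * t) : ℂ) * x t i)
        atTop (nhds c)) ∧
    (c ≠ 0 → ∀ i j : Fin N,
      Tendsto (fun t : ℝ => x t i / x t j) atTop (nhds 1)) := by
  have hx_modes (t : ℝ) (i : Fin N) :
      x t i = Complex.exp (ε * (N - 1) * t) * c + Complex.exp (-ε * t) * (x₀ i - c) := by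
    have htK : t • K = ((t : ℂ) * ε) • (J - 1) := by
      ext
      simp [hK, Complex.real_smul, mul_assoc]
    rw [hx, htK, Matrix.exp_smul_sub_one_mulVec_of_forall_eq_one hJ _ (by simpa using hc)]
    simp only [Fintype.card_fin]
    ring_nf
  have hsync (i : Fin N) :
      Tendsto (fun t : ℝ => Complex.exp (-(ε * ((N : ℝ) - 1) * t) : ℂ) * x t i) atTop (𝓝 c) := by
    have hN : (1 : ℝ) ≤ N := Nat.one_le_cast.mpr i.pos
    have hre : (-ε : ℂ).re < ((ε * (N - 1) : ℝ) : ℂ).re := by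
      rw [Complex.neg_re, Complex.ofReal_re, Complex.ofReal_re]
      nlinarith
    refine (Complex.tendsto_exp_neg_mul_mul_add_exp_mul_mul hre c (x₀ i - c)).congr fun t => ?_
    rw [hx_modes]
    push_cast
    ring_nf
  refine ⟨hsync, fun hc0 i j => ?_⟩
  have hratio := (hsync i).div (hsync j) hc0
  rw [div_self hc0] at hratio
  exact hratio.congr fun t => mul_div_mul_left _ _ (Complex.exp_ne_zero _)

open NormedSpace Filter in
/-- Complete graph, attractive coupling: with `K = ε (J − I)`, `ε > 0`, and
`x(t) = exp(tK) x₀`, we have `e^{−ε(N−1)t} x_i(t) → c` (the mean of `x₀`) for every `i`;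
and if `c ≠ 0` then `x_i(t)/x_j(t) → 1` for all `i, j`: the network phase-synchronizes. -/
theorem complete_graph_phase_synchronization
    (N : ℕ) (hN : 1 ≤ N) (ε : ℝ) (hε : 0 < ε)
    (J : Matrix (Fin N) (Fin N) ℂ) (hJ : ∀ i j, J i j = 1)
    (K : Matrix (Fin N) (Fin N) ℂ) (hK : K = (ε : ℂ) • (J - 1))
    (x₀ : Fin N → ℂ) (c : ℂ) (hc : c = (1 / (N : ℂ)) * ∑ j : Fin N, x₀ j)
    (x : ℝ → Fin N → ℂ) (hx : ∀ t, x t = (exp (t • K)).mulVec x₀) :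
    (∀ i : Fin N,
      Tendsto (fun t : ℝ => Complex.exp (-(ε * ((N : ℝ) - 1) * t) : ℂ) * x t i)
        atTop (nhds c)) ∧
    (c ≠ 0 → ∀ i j : Fin N,
      Tendsto (fun t : ℝ => x t i / x t j) atTop (nhds 1)) :=
  complete_graph_phase_synchronization_general N ε hε J hJ K hK x₀ c hc x hx
end
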